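/- Equip ℝ⁴ with the norm ‖(x,y,w,z)‖ := max(√(x² + y²) + |w|, |x| + √(w² + z²)) (whose dual unit ball is the convex hull of the four circles S₁^± = {(x,y,±1,0) : x²+y²=1} and S₂^± = {(±1,0,w,z) : w²+z²=1}). Then the function g : ℝ⁴ → ℝ, g(x,y,w,z) = max(x − w, x + w, x + z), is a horofunction of (ℝ⁴, ‖·‖) but is not a Busemann point. -/

import Mathlib

open Filter Topology Set

noncomputable section

/-- `φ_z` for the norm `N`: `φ_z(x) = N(z − x) − N(z)`. -/
def phiN {V : Type*} [AddCommGroup V] (N : V → ℝ) (z : V) : V → ℝ :=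
  fun x => N (z - x) - N z

/-- A horofunction for the norm `N`: a limit, uniformly on compact sets, of
functions `φ_{z_n}`, which is not itself of the form `φ_z`. -/
def IsHorofunctionN {V : Type*} [AddCommGroup V] [TopologicalSpace V]
    (N : V → ℝ) (h : V → ℝ) : Prop :=
  (∃ z : ℕ → V, ∀ K : Set V, IsCompact K →
      TendstoUniformlyOn (fun n x => phiN N (z n) x) h atTop K) ∧
  ∀ z : V, h ≠ phiN N z

/-- An almost-geodesic for the norm `N`. -/
def IsAlmostGeodesicN {V : Type*} [AddCommGroup V] (N : V → ℝ)
    (T : Set ℝ) (γ : ℝ → V) : Prop :=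
  T ⊆ Set.Ici (0 : ℝ) ∧ (0 : ℝ) ∈ T ∧ ¬ BddAbove T ∧
  ∀ ε > (0 : ℝ), ∃ M : ℝ, ∀ s ∈ T, ∀ t ∈ T, M ≤ s → s ≤ t →
    |N (γ t - γ s) + N (γ s - γ 0) - t| < ε

/-- A Busemann point for the norm `N`: a horofunction which is the limit, uniformly
on compact sets, of `φ_{γ(t)}` along an almost-geodesic `γ`. -/
def IsBusemannPointN {V : Type*} [AddCommGroup V] [TopologicalSpace V]
    (N : V → ℝ) (h : V → ℝ) : Prop :=
  IsHorofunctionN N h ∧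
  ∃ (T : Set ℝ) (γ : ℝ → V), IsAlmostGeodesicN N T γ ∧
    ∀ K : Set V, IsCompact K → ∀ ε > (0 : ℝ), ∃ M : ℝ, ∀ t ∈ T, M ≤ t →
      ∀ x ∈ K, |phiN N (γ t) x - h x| < ε

/-- The norm `‖(x,y,w,z)‖ = max(√(x² + y²) + |w|, |x| + √(w² + z²))` on `ℝ⁴`. -/
def N4 (p : ℝ × ℝ × ℝ × ℝ) : ℝ :=
  max (Real.sqrt (p.1 ^ 2 + p.2.1 ^ 2) + |p.2.2.1|)
    (|p.1| + Real.sqrt (p.2.2.1 ^ 2 + p.2.2.2 ^ 2))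

/-- `g(x,y,w,z) = max(x − w, x + w, x + z)`. -/
def g4 (p : ℝ × ℝ × ℝ × ℝ) : ℝ :=
  max (p.1 - p.2.2.1) (max (p.1 + p.2.2.1) (p.1 + p.2.2.2))

/-!
Each `φ_z` is bounded below by `-‖z‖`, whereas `g` is not, so `g` is not of the form `φ_z`.
It is the limit of `φ_{z_t}` along `z_t = (t - t³, 2t², 0, -2t)`: both terms of the max defining
`‖z_t‖` equal `t³ + t`, and expanding the two square roots of `‖z_t - x‖` to first order leaves
`max(x + |w|, x + z) = g` up to an error `O(1/t)` on bounded sets.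

Along an almost-geodesic `γ` whose `φ_{γ t}` converge to `h`, the quantity
`h(γ s) + ‖γ s - γ 0‖` stays bounded. For `h = g` this keeps the first coordinate of `γ s` near
`-s` and hence, since `‖γ s - γ 0‖ ≈ s`, the last coordinate bounded below. Then
`φ_{γ s}(0,0,0,-R) ≥ R - C` for a constant `C`, while `g(0,0,0,-R) = 0` for every `R ≥ 0`.
-/

section AddGroupSeminorm

variable {V : Type*} [AddCommGroup V]

theorem neg_le_phiN (p : AddGroupSeminorm V) (z x : V) : -p z ≤ phiN p z x := by
  simp only [phiN]
  linarith [apply_nonneg p (z - x)]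

theorem ne_phiN_of_not_bddBelow (p : AddGroupSeminorm V) {h : V → ℝ}
    (hh : ¬ BddBelow (range h)) (z : V) : h ≠ phiN p z := by
  rintro rfl
  exact hh ⟨-p z, forall_mem_range.2 (neg_le_phiN p z)⟩

theorem IsAlmostGeodesicN.exists_forall_limit_add_lt {p : AddGroupSeminorm V} {h : V → ℝ}
    {T : Set ℝ} {γ : ℝ → V} (hγ : IsAlmostGeodesicN p T γ)
    (hlim : ∀ x, ∀ ε > 0, ∃ M, ∀ t ∈ T, M ≤ t → |phiN p (γ t) x - h x| < ε) :
    ∃ M, ∀ s ∈ T, M ≤ s → h (γ s) + p (γ s - γ 0) < p (γ 0) + 3 := by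
  obtain ⟨-, -, hunb, hgeo⟩ := hγ
  obtain ⟨M, hM⟩ := hgeo 1 one_pos
  refine ⟨M, fun s hs hMs => ?_⟩
  obtain ⟨M', hM'⟩ := hlim (γ s) 1 one_pos
  obtain ⟨t, ht, hlt⟩ := not_bddAbove_iff.1 hunb (max M' s)
  have hst : s ≤ t := (le_max_right _ _).trans hlt.le
  have hlim_s := (abs_lt.1 (hM' t ht ((le_max_left _ _).trans hlt.le))).1
  have hgeo_st := (abs_lt.1 (hM s hs t ht hMs hst)).2
  have hgeo_t := (abs_lt.1 (hM t ht t ht (hMs.trans hst) le_rfl)).1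
  rw [sub_self, map_zero, zero_add] at hgeo_t
  rw [phiN] at hlim_s
  linarith [map_sub_le_add p (γ t) (γ 0)]

end AddGroupSeminorm

open Complex in
theorem sqrt_sq_add_sq_le_add (a b c d : ℝ) :
    √((a + c) ^ 2 + (b + d) ^ 2) ≤ √(a ^ 2 + b ^ 2) + √(c ^ 2 + d ^ 2) := by
  simp only [← norm_add_mul_I]
  push_cast
  exact (congrArg norm (by ring)).trans_le (norm_add_le ((a : ℂ) + b * I) (c + d * I))

theorem abs_sqrt_sub_le {u A : ℝ} (hu : 0 ≤ u) (hA : 0 < A) : |√u - A| ≤ |u - A ^ 2| / A := by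
  have hsum : 0 < √u + A := by positivity
  have hquot : √u - A = (u - A ^ 2) / (√u + A) := by
    rw [eq_div_iff hsum.ne']
    linear_combination Real.sq_sqrt hu
  rw [hquot, abs_div, abs_of_pos hsum]
  gcongr
  exact le_add_of_nonneg_left (Real.sqrt_nonneg u)

theorem N4_add_le (q r : ℝ × ℝ × ℝ × ℝ) : N4 (q + r) ≤ N4 q + N4 r := by
  have hq₁ : √(q.1 ^ 2 + q.2.1 ^ 2) + |q.2.2.1| ≤ N4 q := le_max_left _ _
  have hq₂ : |q.1| + √(q.2.2.1 ^ 2 + q.2.2.2 ^ 2) ≤ N4 q := le_max_right _ _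
  have hr₁ : √(r.1 ^ 2 + r.2.1 ^ 2) + |r.2.2.1| ≤ N4 r := le_max_left _ _
  have hr₂ : |r.1| + √(r.2.2.1 ^ 2 + r.2.2.2 ^ 2) ≤ N4 r := le_max_right _ _
  refine max_le ?_ ?_ <;> simp only [Prod.fst_add, Prod.snd_add]
  · linarith [sqrt_sq_add_sq_le_add q.1 q.2.1 r.1 r.2.1, abs_add_le q.2.2.1 r.2.2.1]
  · linarith [sqrt_sq_add_sq_le_add q.2.2.1 q.2.2.2 r.2.2.1 r.2.2.2, abs_add_le q.1 r.1]

def N4Seminorm : AddGroupSeminorm (ℝ × ℝ × ℝ × ℝ) where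
  toFun := N4
  map_zero' := by simp [N4]
  add_le' := N4_add_le
  neg' := by simp [N4]

theorem coe_N4Seminorm : ⇑N4Seminorm = N4 := rfl

theorem abs_fst_add_abs_snd_snd_snd_le_N4 (q : ℝ × ℝ × ℝ × ℝ) : |q.1| + |q.2.2.2| ≤ N4 q :=
  le_max_of_le_right <| by gcongr; exact Real.abs_le_sqrt (le_add_of_nonneg_left (sq_nonneg _))

theorem g4_eq_max_abs (q : ℝ × ℝ × ℝ × ℝ) :
    g4 q = max (q.1 + |q.2.2.1|) (q.1 + q.2.2.2) := by
  rw [g4, abs_eq_max_neg, ← max_add_add_left, sub_eq_add_neg, max_assoc]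
  exact max_left_comm _ _ _

theorem fst_le_g4 (q : ℝ × ℝ × ℝ × ℝ) : q.1 ≤ g4 q :=
  (le_add_of_nonneg_right (abs_nonneg _)).trans ((g4_eq_max_abs q).ge.trans' (le_max_left _ _))

theorem not_bddBelow_range_g4 : ¬ BddBelow (range g4) := by
  rintro ⟨c, hc⟩
  have := hc (mem_range_self (c - 1, 0, 0, 0))
  norm_num [g4] at this

theorem sub_two_mul_le_phiN_N4 (q q₀ : ℝ × ℝ × ℝ × ℝ) (R : ℝ) :
    R - 2 * (g4 q + N4 (q - q₀) + N4 q₀) ≤ phiN N4 q (0, 0, 0, -R) := by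
  have hfar := abs_fst_add_abs_snd_snd_snd_le_N4 (q - (0, 0, 0, -R))
  have hstep := abs_fst_add_abs_snd_snd_snd_le_N4 (q - q₀)
  have hbase := abs_fst_add_abs_snd_snd_snd_le_N4 q₀
  have htri := le_map_add_map_sub N4Seminorm q q₀
  simp only [coe_N4Seminorm, Prod.fst_sub, Prod.snd_sub, sub_zero, sub_neg_eq_add]
    at hfar hstep htri
  simp only [phiN]
  linarith [fst_le_g4 q, neg_abs_le q.1, le_abs_self (q.2.2.2 + R), abs_sub_abs_le_abs_sub q.1 q₀.1,
    neg_abs_le q₀.2.2.2, neg_abs_le (q.2.2.2 - q₀.2.2.2)]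

theorem g4_zero_zero_zero_neg {R : ℝ} (hR : 0 ≤ R) : g4 (0, 0, 0, -R) = 0 := by
  simp [g4, hR]

/-- `(t³ - t, 2t², t³ + t)` is a Pythagorean triple. -/
def horoSeq (t : ℝ) : ℝ × ℝ × ℝ × ℝ := (t - t ^ 3, 2 * t ^ 2, 0, -(2 * t))

theorem N4_horoSeq {t : ℝ} (ht : 1 ≤ t) : N4 (horoSeq t) = t ^ 3 + t := by
  have hcube : t ≤ t ^ 3 := by
    nlinarith [mul_nonneg (sub_nonneg.2 ht) (by positivity : 0 ≤ t * (t + 1))]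
  have hhyp : (t - t ^ 3) ^ 2 + (2 * t ^ 2) ^ 2 = (t ^ 3 + t) ^ 2 := by ring
  simp only [N4, horoSeq, hhyp, abs_zero, add_zero, zero_pow two_ne_zero, zero_add, neg_sq,
    abs_of_nonpos (sub_nonpos.2 hcube)]
  rw [Real.sqrt_sq (by positivity), Real.sqrt_sq (by positivity)]
  ring_nf
  exact max_self _

theorem phiN_horoSeq {t a : ℝ} (ht : 2 ≤ t) (ha : |a| ≤ t) (b c d : ℝ) :
    phiN N4 (horoSeq t) (a, b, c, d) =
      max (a + |c| + (√((t ^ 3 - t + a) ^ 2 + (2 * t ^ 2 - b) ^ 2) - (t ^ 3 + t + a)))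
        (a + d + (√(c ^ 2 + (2 * t + d) ^ 2) - (2 * t + d))) := by
  have hfst : 0 ≤ t ^ 3 - t + a := by
    nlinarith [abs_le.1 ha,
      mul_le_mul_of_nonneg_left (by nlinarith : 4 ≤ t ^ 2) (by linarith : 0 ≤ t)]
  rw [phiN, N4_horoSeq (by linarith)]
  simp only [N4, horoSeq, Prod.mk_sub_mk, zero_sub, abs_neg, neg_sq]
  rw [← max_sub_sub_right, show t - t ^ 3 - a = -(t ^ 3 - t + a) by ring, abs_neg, neg_sq,
    abs_of_nonneg hfst, show -(2 * t) - d = -(2 * t + d) by ring, neg_sq]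
  congr 1 <;> ring

theorem abs_sqrt_horoSeq_sub_le {t R a b : ℝ} (ht : 1 ≤ t) (hRt : R ≤ t) (ha : |a| ≤ R)
    (hb : |b| ≤ R) :
    |√((t ^ 3 - t + a) ^ 2 + (2 * t ^ 2 - b) ^ 2) - (t ^ 3 + t + a)| ≤ 9 * R / t := by
  have hR : 0 ≤ R := (abs_nonneg a).trans ha
  obtain ⟨ha₁, ha₂⟩ := abs_le.1 ha
  obtain ⟨hb₁, hb₂⟩ := abs_le.1 hb
  have ht0 : 0 < t := by linarith
  have hcube : t ^ 3 ≤ t ^ 3 + t + a := by linarith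
  have herr : |b ^ 2 - 4 * t * a - 4 * t ^ 2 * b| ≤ 9 * R * t ^ 2 := by
    have hRR : R * R ≤ R * t := mul_le_mul_of_nonneg_left hRt hR
    have hRt2 : R * t ≤ R * t ^ 2 := mul_le_mul_of_nonneg_left (by nlinarith) hR
    have := mul_le_mul_of_nonneg_left ha₁ ht0.le
    have := mul_le_mul_of_nonneg_left ha₂ ht0.le
    have := mul_le_mul_of_nonneg_left hb₁ (sq_nonneg t)
    have := mul_le_mul_of_nonneg_left hb₂ (sq_nonneg t)
    rw [abs_le]
    constructor <;> linarith [sq_nonneg b, sq_le_sq' hb₁ hb₂]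
  calc _ ≤ |(t ^ 3 - t + a) ^ 2 + (2 * t ^ 2 - b) ^ 2 - (t ^ 3 + t + a) ^ 2| / (t ^ 3 + t + a) :=
        abs_sqrt_sub_le (by positivity) (by linarith [pow_pos ht0 3])
    _ = |b ^ 2 - 4 * t * a - 4 * t ^ 2 * b| / (t ^ 3 + t + a) := by ring_nf
    _ ≤ 9 * R * t ^ 2 / t ^ 3 := by gcongr
    _ = 9 * R / t := by field_simp

theorem abs_phiN_horoSeq_sub_g4_le {t R : ℝ} (ht : 2 ≤ t) (hRt : R ≤ t)
    {x : ℝ × ℝ × ℝ × ℝ} (hx : ‖x‖ ≤ R) :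
    |phiN N4 (horoSeq t) x - g4 x| ≤ (R ^ 2 + 9 * R) / t := by
  obtain ⟨a, b, c, d⟩ := x
  have ha : |a| ≤ R := (norm_fst_le _).trans hx
  have hb : |b| ≤ R := ((norm_fst_le _).trans (norm_snd_le _)).trans hx
  have hc : |c| ≤ R := (((norm_fst_le _).trans (norm_snd_le _)).trans (norm_snd_le _)).trans hx
  have hd : |d| ≤ R := (((norm_snd_le _).trans (norm_snd_le _)).trans (norm_snd_le _)).trans hx
  have ht0 : 0 < t := by linarith
  have hvert : |√(c ^ 2 + (2 * t + d) ^ 2) - (2 * t + d)| ≤ R ^ 2 / t :=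
    calc _ ≤ |c ^ 2 + (2 * t + d) ^ 2 - (2 * t + d) ^ 2| / (2 * t + d) :=
          abs_sqrt_sub_le (by positivity) (by linarith [neg_abs_le d])
      _ ≤ R ^ 2 / t := by
        rw [add_sub_cancel_right, abs_sq, ← sq_abs]
        gcongr
        linarith [neg_abs_le d]
  rw [phiN_horoSeq ht (ha.trans hRt), g4_eq_max_abs, add_div]
  refine (abs_max_sub_max_le_max _ _ _ _).trans (max_le ?_ ?_) <;> rw [add_sub_cancel_left]
  · linarith [abs_sqrt_horoSeq_sub_le (by linarith) hRt ha hb, div_nonneg (sq_nonneg R) ht0.le]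
  · linarith [div_nonneg (by linarith [abs_nonneg a] : 0 ≤ 9 * R) ht0.le]

theorem tendstoUniformlyOn_phiN_horoSeq {K : Set (ℝ × ℝ × ℝ × ℝ)} (hK : IsCompact K) :
    TendstoUniformlyOn (fun (n : ℕ) x => phiN N4 (horoSeq n) x) g4 atTop K := by
  obtain ⟨R, hR⟩ := hK.isBounded.exists_norm_le
  rw [Metric.tendstoUniformlyOn_iff]
  intro ε hε
  have hlim : Tendsto (fun n : ℕ => (R ^ 2 + 9 * R) / n) atTop (𝓝 0) :=
    tendsto_const_div_atTop_nhds_zero_nat _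
  filter_upwards [hlim.eventually (gt_mem_nhds hε),
    tendsto_natCast_atTop_atTop.eventually_ge_atTop (max R 2)] with n hsmall hlarge x hx
  rw [dist_comm, Real.dist_eq]
  exact (abs_phiN_horoSeq_sub_g4_le ((le_max_right _ _).trans hlarge)
    ((le_max_left _ _).trans hlarge) (hR x hx)).trans_lt hsmall

theorem example4_horofunction_not_busemann :
    IsHorofunctionN N4 g4 ∧ ¬ IsBusemannPointN N4 g4 := by
  refine ⟨⟨⟨fun n => horoSeq n, fun K hK => tendstoUniformlyOn_phiN_horoSeq hK⟩,
    ne_phiN_of_not_bddBelow N4Seminorm not_bddBelow_range_g4⟩, ?_⟩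
  rintro ⟨-, T, γ, hγ, hconv⟩
  have hlim : ∀ x, ∀ ε > 0, ∃ M, ∀ t ∈ T, M ≤ t → |phiN N4 (γ t) x - g4 x| < ε :=
    fun x ε hε => (hconv {x} isCompact_singleton ε hε).imp fun M hM t ht hMt => hM t ht hMt x rfl
  obtain ⟨M, hM⟩ := IsAlmostGeodesicN.exists_forall_limit_add_lt (p := N4Seminorm) hγ hlim
  simp only [coe_N4Seminorm] at hM
  have hN : 0 ≤ N4 (γ 0) := apply_nonneg N4Seminorm _
  have hR : 0 ≤ 4 * N4 (γ 0) + 7 := by linarith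
  obtain ⟨M', hM'⟩ := hlim (0, 0, 0, -(4 * N4 (γ 0) + 7)) 1 one_pos
  obtain ⟨s, hs, hMs⟩ := not_bddAbove_iff.1 hγ.2.2.1 (max M M')
  have hclose := hM' s hs ((le_max_right _ _).trans hMs.le)
  rw [g4_zero_zero_zero_neg hR, sub_zero] at hclose
  linarith [abs_lt.1 hclose, hM s hs ((le_max_left _ _).trans hMs.le),
    sub_two_mul_le_phiN_N4 (γ s) (γ 0) (4 * N4 (γ 0) + 7)]
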